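/- arXiv:1909.10275 — 4 statements merged into one kernel-verified Lean document; each statement's English description precedes it below -/
import Mathlib

section
/- Let S be an r×r matrix with all eigenvalues having positive real part, L an m×r matrix, and t > 0. Suppose Q is the unique solution of −S* Q − Q S + L* L − e^{−S*t} L* L e^{−St} = 0 and Q is invertible. Define A_r = S + ξ L_T where ξ = [−Q^{-1}L*, Q^{-1}e^{−S*t}L*] and L_T is the (2m)×r matrix stacking L on top of L e^{−St}. Then A_r = −Q^{-1} S* Q; in particular the eigenvalues of A_r are the negatives of the conjugates of the eigenvalues of S. -/
open Matrix NormedSpace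

/-! Rewritten with `P = LᴴL − e^{−Sᴴt}LᴴLe^{−St}`, the Lyapunov equation is the Sylvester equation
`SᴴQ + QS = P`. Multiplying it on the left by `Q⁻¹` gives `S − Q⁻¹P = −Q⁻¹SᴴQ`, and `S − Q⁻¹P` is
exactly `A_r`. Hence `A_r` is similar to `−Sᴴ`, whose spectrum is `−conj` applied to that of `S`. -/

theorem sub_mul_eq_neg_conj_of_mul_add_mul_eq {A : Type*} [Ring A] {S T Q Q' P : A}
    (hQ : Q' * Q = 1) (h : T * Q + Q * S = P) : S - Q' * P = -(Q' * T * Q) := by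
  rw [← h, mul_add, ← mul_assoc Q' Q, hQ, one_mul, mul_assoc]
  abel

theorem spectrum_neg_star {R A : Type*} [CommRing R] [InvolutiveStar R] [Ring A] [Algebra R A]
    [StarRing A] [StarModule R A] (a : A) :
    spectrum R (-star a) = (fun z => -star z) '' spectrum R a := by
  rw [← spectrum.neg_eq, spectrum.map_star, ← Set.image_star, ← Set.image_neg_eq_neg,
    Set.image_image]

theorem Matrix.spectrum_nonsing_inv_mul_mul {n R : Type*} [Fintype n] [DecidableEq n]
    [CommRing R] {Q : Matrix n n R} (hQ : IsUnit Q) (A : Matrix n n R) :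
    spectrum R (Q⁻¹ * A * Q) = spectrum R A := by
  obtain ⟨u, rfl⟩ := hQ
  rw [← coe_units_inv, spectrum.units_conjugate']

theorem tlpork_pole_placement_general
    (r m : ℕ) (S : Matrix (Fin r) (Fin r) ℂ) (L : Matrix (Fin m) (Fin r) ℂ)
    (t : ℝ)
    (Q : Matrix (Fin r) (Fin r) ℂ) (hQinv : IsUnit Q)
    (hLyap : -(Sᴴ * Q) - Q * S + Lᴴ * L
        - exp (-(t • Sᴴ)) * Lᴴ * L * exp (-(t • S)) = 0)
    (A_r : Matrix (Fin r) (Fin r) ℂ)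
    (hA_r : A_r = S + (-(Q⁻¹ * Lᴴ * L)
        + Q⁻¹ * exp (-(t • Sᴴ)) * Lᴴ * L * exp (-(t • S)))) :
    A_r = -(Q⁻¹ * Sᴴ * Q) ∧
      spectrum ℂ A_r = (fun z => -(starRingEnd ℂ z)) '' spectrum ℂ S := by
  have hSylvester : Sᴴ * Q + Q * S = Lᴴ * L - exp (-(t • Sᴴ)) * Lᴴ * L * exp (-(t • S)) := by
    linear_combination (norm := abel) -hLyap
  have hA : A_r = -(Q⁻¹ * Sᴴ * Q) := by
    rw [hA_r, ← sub_mul_eq_neg_conj_of_mul_add_mul_eq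
      (nonsing_inv_mul Q ((isUnit_iff_isUnit_det Q).mp hQinv)) hSylvester]
    simp only [Matrix.mul_sub, Matrix.mul_assoc]
    abel
  refine ⟨hA, ?_⟩
  rw [hA, ← Matrix.neg_mul, ← Matrix.mul_neg, spectrum_nonsing_inv_mul_mul hQinv,
    ← star_eq_conjTranspose, spectrum_neg_star]
  rfl

/-- With `ξ L_T = −Q⁻¹LᴴL + Q⁻¹e^{−Sᴴt}LᴴLe^{−St}`, the matrix
`A_r = S + ξ L_T` equals `−Q⁻¹ Sᴴ Q`; in particular the eigenvalues of `A_r` are the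
negatives of the conjugates of the eigenvalues of `S`. -/
theorem tlpork_pole_placement
    (r m : ℕ) (S : Matrix (Fin r) (Fin r) ℂ) (L : Matrix (Fin m) (Fin r) ℂ)
    (hS : ∀ μ ∈ spectrum ℂ S, 0 < μ.re)
    (t : ℝ) (ht : 0 < t)
    (Q : Matrix (Fin r) (Fin r) ℂ) (hQinv : IsUnit Q)
    (hLyap : -(Sᴴ * Q) - Q * S + Lᴴ * L
        - exp (-(t • Sᴴ)) * Lᴴ * L * exp (-(t • S)) = 0)
    (A_r : Matrix (Fin r) (Fin r) ℂ)
    (hA_r : A_r = S + (-(Q⁻¹ * Lᴴ * L)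
        + Q⁻¹ * exp (-(t • Sᴴ)) * Lᴴ * L * exp (-(t • S)))) :
    A_r = -(Q⁻¹ * Sᴴ * Q) ∧
      spectrum ℂ A_r = (fun z => -(starRingEnd ℂ z)) '' spectrum ℂ S :=
  tlpork_pole_placement_general r m S L t Q hQinv hLyap A_r hA_r
end

section
/- Dual version: let S be r×r with eigenvalues in the open right half-plane, B̄ an r×p matrix, t > 0, and P the unique invertible Hermitian solution of −S P − P S* + B̄ B̄* − e^{−St} B̄ B̄* e^{−S*t} = 0. Define A_r = S + B̃ ξ where B̃ = [B̄, e^{−St}B̄] and ξ is the block column [−B̄* P^{-1}; B̄* e^{−S*t} P^{-1}]. Then A_r = −P S* P^{-1}. -/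
open Matrix NormedSpace

theorem Matrix.sub_mul_nonsing_inv_eq_neg_conj {n α : Type*} [Fintype n] [DecidableEq n]
    [CommRing α] {S P X Q : Matrix n n α} (hP : IsUnit P) (hQ : S * P + P * X = Q) :
    S - Q * P⁻¹ = -(P * X * P⁻¹) := by
  rw [← hQ, add_mul, mul_assoc S, mul_nonsing_inv P ((isUnit_iff_isUnit_det P).mp hP), mul_one]
  abel

theorem otlpork_pole_placement_general
    (r p : ℕ) (S : Matrix (Fin r) (Fin r) ℂ) (Bbar : Matrix (Fin r) (Fin p) ℂ)
    (t : ℝ)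
    (P : Matrix (Fin r) (Fin r) ℂ) (hPinv : IsUnit P)
    (hLyap : -(S * P) - P * Sᴴ + Bbar * Bbarᴴ
        - NormedSpace.exp (-(t • S)) * Bbar * Bbarᴴ * NormedSpace.exp (-(t • Sᴴ)) = 0)
    (A_r : Matrix (Fin r) (Fin r) ℂ)
    (hA_r : A_r = S + (-(Bbar * Bbarᴴ * P⁻¹)
        + NormedSpace.exp (-(t • S)) * Bbar * Bbarᴴ * NormedSpace.exp (-(t • Sᴴ)) * P⁻¹)) :
    A_r = -(P * Sᴴ * P⁻¹) := by
  have hQ : S * P + P * Sᴴ = Bbar * Bbarᴴ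
      - NormedSpace.exp (-(t • S)) * Bbar * Bbarᴴ * NormedSpace.exp (-(t • Sᴴ)) := by
    rw [eq_comm, ← sub_eq_zero, ← hLyap]
    abel
  rw [hA_r, ← sub_mul_nonsing_inv_eq_neg_conj hPinv hQ, sub_mul]
  abel

/-- dual pole placement: With
`B̃ ξ = −B̄B̄*P⁻¹ + e^{−St}B̄B̄*e^{−Sᴴt}P⁻¹`, the matrix `A_r = S + B̃ ξ`
equals `−P Sᴴ P⁻¹`. -/
theorem otlpork_pole_placement
    (r p : ℕ) (S : Matrix (Fin r) (Fin r) ℂ) (Bbar : Matrix (Fin r) (Fin p) ℂ)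
    (hS : ∀ μ ∈ spectrum ℂ S, 0 < μ.re)
    (t : ℝ) (ht : 0 < t)
    (P : Matrix (Fin r) (Fin r) ℂ) (hPinv : IsUnit P) (hPherm : P.IsHermitian)
    (hLyap : -(S * P) - P * Sᴴ + Bbar * Bbarᴴ
        - NormedSpace.exp (-(t • S)) * Bbar * Bbarᴴ * NormedSpace.exp (-(t • Sᴴ)) = 0)
    (A_r : Matrix (Fin r) (Fin r) ℂ)
    (hA_r : A_r = S + (-(Bbar * Bbarᴴ * P⁻¹)
        + NormedSpace.exp (-(t • S)) * Bbar * Bbarᴴ * NormedSpace.exp (-(t • Sᴴ)) * P⁻¹)) :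
    A_r = -(P * Sᴴ * P⁻¹) :=
  otlpork_pole_placement_general r p S Bbar t P hPinv hLyap A_r hA_r
end

section
/- Theorem 1(v) core computation: With A Hurwitz, V_t ∈ ℂ^{n×r}, S_r ∈ ℂ^{r×r}, L_r ∈ ℂ^{m×r}, Q_S invertible solving −S_r*Q_S − Q_S S_r + L_r*L_r − e^{−S_r*t}L_r*L_re^{−S_rt} = 0, define A_r = −Q_S^{-1}S_r*Q_S, B_r = −Q_S^{-1}L_r*, P̂_T = Q_S^{-1}. If A V_t = V_t S_r + B L_r − e^{At} B L_r e^{−S_r t}, then X := V_t P̂_T satisfies A X + X A_r* + B B_r* − e^{At} B B_r* e^{A_r* t} = 0; in particular, by uniqueness, the cross-Gramian P̃_T equals V_t Q_S^{-1}. -/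
open Matrix MeasureTheory NormedSpace

/-!
`Q_S` is Hermitian: `Q_Sᴴ` solves the same Lyapunov equation, and `S_rᴴ X + X S_r = 0` has only the
trivial solution because `S_rᴴ` and `-S_r` have disjoint spectra. Hence `A_rᴴ = -Q_S S_r Q_S⁻¹`,
`B_rᴴ = -L_r Q_S⁻¹` and `exp (t A_rᴴ) = Q_S exp (-t S_r) Q_S⁻¹`, so right-multiplying the equation
for `V_t` by `Q_S⁻¹` gives the Sylvester equation for `V_t Q_S⁻¹`. The fundamental theorem of
calculus applied to `τ ↦ exp (τ A) B B_rᴴ exp (τ A_rᴴ)` shows that the cross Gramian solves the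
same equation, and since `A` and `-A_rᴴ` have disjoint spectra its solution is unique.
-/

namespace Matrix

section Sylvester

variable {K : Type*} [Field K] {m n : Type*} [Fintype m] [DecidableEq m] [Fintype n]
  [DecidableEq n]

open Polynomial in
theorem aeval_mul_eq_mul_aeval_of_mul_eq_mul {M : Matrix m m K} {N : Matrix n n K}
    {D : Matrix m n K} (hD : M * D = D * N) (p : K[X]) : aeval M p * D = D * aeval N p := by
  have hpow (k : ℕ) : M ^ k * D = D * N ^ k := by
    induction k with
    | zero => simp
    | succ k ih =>
      rw [pow_succ', pow_succ', Matrix.mul_assoc, ih, ← Matrix.mul_assoc, hD, Matrix.mul_assoc]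
  induction p using Polynomial.induction_on' with
  | add p q hp hq => rw [map_add, map_add, Matrix.add_mul, Matrix.mul_add, hp, hq]
  | monomial k c => simp only [aeval_monomial, ← Algebra.smul_def, Matrix.smul_mul, hpow,
      Matrix.mul_smul]

open Polynomial in
/-- `χ_M(N)` is invertible, since its eigenvalues `χ_M(μ)`, `μ ∈ σ(N)`, are nonzero, while
`D χ_M(N) = χ_M(M) D = 0`. -/
theorem eq_zero_of_mul_eq_mul_of_disjoint_spectrum [IsAlgClosed K] {M : Matrix m m K}
    {N : Matrix n n K} {D : Matrix m n K} (hMN : Disjoint (spectrum K M) (spectrum K N))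
    (hD : M * D = D * N) : D = 0 := by
  cases isEmpty_or_nonempty m
  · exact Subsingleton.elim _ _
  have hdeg : 0 < M.charpoly.degree := by
    rw [charpoly_degree_eq_dim]
    exact_mod_cast Fintype.card_pos
  have hunit : IsUnit (aeval N M.charpoly) := by
    by_contra h
    obtain ⟨μ, hμN, hμ⟩ : (0 : K) ∈ (eval · M.charpoly) '' spectrum K N := by
      rw [← spectrum.map_polynomial_aeval_of_degree_pos N _ hdeg]
      exact (spectrum.zero_mem_iff K).2 h
    exact hMN.ne_of_mem (mem_spectrum_of_isRoot_charpoly hμ) hμN rfl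
  have hzero : D * aeval N M.charpoly = 0 := by
    rw [← aeval_mul_eq_mul_aeval_of_mul_eq_mul hD, aeval_self_charpoly, Matrix.zero_mul]
  rw [← mul_nonsing_inv_cancel_right (A := aeval N M.charpoly) D
    ((isUnit_iff_isUnit_det _).1 hunit), hzero, Matrix.zero_mul]

end Sylvester

section Hurwitz

variable {m n : Type*} [Fintype m] [DecidableEq m] [Fintype n] [DecidableEq n]

theorem mem_spectrum_neg_conjTranspose_iff {M : Matrix m m ℂ} {μ : ℂ} :
    μ ∈ spectrum ℂ (-Mᴴ) ↔ -star μ ∈ spectrum ℂ M := by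
  rw [← spectrum.neg_eq, Set.mem_neg, ← star_eq_conjTranspose, spectrum.map_star, Set.mem_star,
    star_neg]

theorem eq_zero_of_mul_add_mul_conjTranspose_eq_zero {M : Matrix m m ℂ} {N : Matrix n n ℂ}
    {D : Matrix m n ℂ} (hM : ∀ μ ∈ spectrum ℂ M, μ.re < 0) (hN : ∀ μ ∈ spectrum ℂ N, μ.re < 0)
    (hD : M * D + D * Nᴴ = 0) : D = 0 := by
  refine eq_zero_of_mul_eq_mul_of_disjoint_spectrum (M := M) (N := -Nᴴ) ?_ ?_
  · refine Set.disjoint_left.2 fun μ hμM hμN => ?_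
    have hμ := hN _ (mem_spectrum_neg_conjTranspose_iff.1 hμN)
    rw [Complex.neg_re, Complex.star_def, Complex.conj_re] at hμ
    linarith [hM μ hμM]
  · rw [Matrix.mul_neg, eq_neg_iff_add_eq_zero, hD]

theorem isHermitian_of_isHermitian_conjTranspose_mul_add_mul {S Q : Matrix n n ℂ}
    (hS : ∀ μ ∈ spectrum ℂ S, 0 < μ.re) (hR : (Sᴴ * Q + Q * S).IsHermitian) : Q.IsHermitian := by
  have hS' : ∀ μ ∈ spectrum ℂ (-Sᴴ), μ.re < 0 := fun μ hμ => by
    simpa using hS _ (mem_spectrum_neg_conjTranspose_iff.1 hμ)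
  have hR' : Qᴴ * S + Sᴴ * Qᴴ = Sᴴ * Q + Q * S := by
    simpa only [conjTranspose_add, conjTranspose_mul, conjTranspose_conjTranspose] using hR.eq
  refine sub_eq_zero.1 (eq_zero_of_mul_add_mul_conjTranspose_eq_zero hS' hS' ?_)
  rw [conjTranspose_neg, conjTranspose_conjTranspose, ← sub_eq_zero.2 hR'.symm]
  noncomm_ring

theorem isHermitian_of_lyapunov_eq_zero {p : Type*} [Fintype p] {S Q F : Matrix n n ℂ}
    {L : Matrix p n ℂ} (hS : ∀ μ ∈ spectrum ℂ S, 0 < μ.re)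
    (hQ : -(Sᴴ * Q) - Q * S + Lᴴ * L - Fᴴ * Lᴴ * L * F = 0) : Q.IsHermitian := by
  refine isHermitian_of_isHermitian_conjTranspose_mul_add_mul hS ?_
  have hR : Sᴴ * Q + Q * S = Lᴴ * L - Fᴴ * (Lᴴ * L) * F := by
    rw [← sub_eq_zero, ← neg_eq_zero, ← hQ]
    simp only [Matrix.mul_assoc]
    abel
  rw [hR]
  exact (isHermitian_conjTranspose_mul_self L).sub
    (isHermitian_conjTranspose_mul_mul F (isHermitian_conjTranspose_mul_self L))

end Hurwitz

section Calculus

variable {𝕜 : Type*} [RCLike 𝕜] {l m n : Type*}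

theorem hasDerivAt_exp_smul_apply [Fintype m] [DecidableEq m] (M : Matrix m m 𝕜) (τ : ℝ)
    (i j : m) : HasDerivAt (fun s : ℝ => exp (s • M) i j) ((M * exp (τ • M)) i j) τ := by
  let _ : NormedRing (Matrix m m 𝕜) := Matrix.linftyOpNormedRing
  let _ : NormedAlgebra ℝ (Matrix m m 𝕜) := Matrix.linftyOpNormedAlgebra
  exact (LinearMap.toContinuousLinearMap (entryLinearMap ℝ 𝕜 i j)).hasFDerivAt.comp_hasDerivAt τ
    (hasDerivAt_exp_smul_const' M τ)

theorem hasDerivAt_mul_apply [Fintype m] {F : ℝ → Matrix l m 𝕜} {G : ℝ → Matrix m n 𝕜}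
    {F' : Matrix l m 𝕜} {G' : Matrix m n 𝕜} {τ : ℝ}
    (hF : ∀ i j, HasDerivAt (fun s => F s i j) (F' i j) τ)
    (hG : ∀ i j, HasDerivAt (fun s => G s i j) (G' i j) τ) (i : l) (k : n) :
    HasDerivAt (fun s => (F s * G s) i k) ((F' * G τ + F τ * G') i k) τ := by
  simp only [mul_apply, add_apply, ← Finset.sum_add_distrib]
  exact HasDerivAt.fun_sum fun j _ => (hF i j).mul (hG j k)

theorem hasDerivAt_exp_smul_mul_mul_exp_smul_apply [Fintype m] [DecidableEq m] [Fintype n]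
    [DecidableEq n] (M : Matrix m m 𝕜) (N : Matrix n n 𝕜) (C : Matrix m n 𝕜) (τ : ℝ) (i : m)
    (j : n) :
    HasDerivAt (fun s : ℝ => (exp (s • M) * C * exp (s • N)) i j)
      ((M * (exp (τ • M) * C * exp (τ • N)) + exp (τ • M) * C * exp (τ • N) * N) i j) τ := by
  have hMC (i k) :
      HasDerivAt (fun s : ℝ => (exp (s • M) * C) i k) ((M * exp (τ • M) * C) i k) τ := by
    simpa using hasDerivAt_mul_apply (G := fun _ => C) (G' := 0) (hasDerivAt_exp_smul_apply M τ)
      (fun _ _ => hasDerivAt_const _ _) i k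
  have hN : N * exp (τ • N) = exp (τ • N) * N := ((Commute.refl N).smul_right τ).exp_right.eq
  convert hasDerivAt_mul_apply hMC (hasDerivAt_exp_smul_apply N τ) i j using 2 <;>
    simp only [hN, Matrix.mul_assoc]

theorem mul_of_intervalIntegral [Fintype m] {F : ℝ → Matrix m n 𝕜} {a b : ℝ}
    (hF : ∀ i j, IntervalIntegrable (fun τ => F τ i j) volume a b) (M : Matrix l m 𝕜) :
    M * of (fun i j => ∫ τ in a..b, F τ i j) = of fun i j => ∫ τ in a..b, (M * F τ) i j := by
  ext i j
  simp only [mul_apply, of_apply, ← intervalIntegral.integral_const_mul]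
  exact (intervalIntegral.integral_finsetSum fun k _ => (hF k j).const_mul _).symm

theorem of_intervalIntegral_mul [Fintype m] {F : ℝ → Matrix l m 𝕜} {a b : ℝ}
    (hF : ∀ i j, IntervalIntegrable (fun τ => F τ i j) volume a b) (M : Matrix m n 𝕜) :
    of (fun i j => ∫ τ in a..b, F τ i j) * M = of fun i j => ∫ τ in a..b, (F τ * M) i j := by
  ext i j
  simp only [mul_apply, of_apply, ← intervalIntegral.integral_mul_const]
  exact (intervalIntegral.integral_finsetSum fun k _ => (hF i k).mul_const _).symm

theorem mul_add_mul_eq_of_eq_intervalIntegral_exp_smul [Fintype m] [DecidableEq m] [Fintype n]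
    [DecidableEq n] {M : Matrix m m 𝕜} {N : Matrix n n 𝕜} {C P : Matrix m n 𝕜} {a b : ℝ}
    (hP : P = of fun i j => ∫ τ in a..b, (exp (τ • M) * C * exp (τ • N)) i j) :
    M * P + P * N = exp (b • M) * C * exp (b • N) - exp (a • M) * C * exp (a • N) := by
  set G : ℝ → Matrix m n 𝕜 := fun τ => exp (τ • M) * C * exp (τ • N)
  have hG' (τ i j) := hasDerivAt_exp_smul_mul_mul_exp_smul_apply M N C τ i j
  have hG : Continuous G := continuous_matrix fun i j =>
    continuous_iff_continuousAt.2 fun τ => (hG' τ i j).continuousAt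
  have hMG : Continuous fun τ => M * G τ := continuous_const.matrix_mul hG
  have hGN : Continuous fun τ => G τ * N := hG.matrix_mul continuous_const
  rw [hP, mul_of_intervalIntegral (fun i j => (hG.matrix_elem i j).intervalIntegrable a b),
    of_intervalIntegral_mul (fun i j => (hG.matrix_elem i j).intervalIntegrable a b)]
  ext i j
  rw [add_apply, of_apply, of_apply, ← intervalIntegral.integral_add
    ((hMG.matrix_elem i j).intervalIntegrable a b) ((hGN.matrix_elem i j).intervalIntegrable a b)]
  exact intervalIntegral.integral_eq_sub_of_hasDerivAt (fun τ _ => hG' τ i j)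
    (((hMG.add hGN).matrix_elem i j).intervalIntegrable a b)

end Calculus

end Matrix

theorem theorem1_v_cross_gramian_general
    (n r m : ℕ) (A : Matrix (Fin n) (Fin n) ℂ) (B : Matrix (Fin n) (Fin m) ℂ)
    (hA : ∀ μ ∈ spectrum ℂ A, μ.re < 0)
    (t : ℝ)
    (S_r : Matrix (Fin r) (Fin r) ℂ) (L_r : Matrix (Fin m) (Fin r) ℂ)
    (hS : ∀ μ ∈ spectrum ℂ S_r, 0 < μ.re)
    (Q_S : Matrix (Fin r) (Fin r) ℂ) (hQinv : IsUnit Q_S)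
    (hLyap : -(S_rᴴ * Q_S) - Q_S * S_r + L_rᴴ * L_r
        - NormedSpace.exp (-(t • S_rᴴ)) * L_rᴴ * L_r * NormedSpace.exp (-(t • S_r)) = 0)
    (A_r : Matrix (Fin r) (Fin r) ℂ) (B_r : Matrix (Fin r) (Fin m) ℂ)
    (hA_r : A_r = -(Q_S⁻¹ * S_rᴴ * Q_S)) (hB_r : B_r = -(Q_S⁻¹ * L_rᴴ))
    (hA_rHur : ∀ μ ∈ spectrum ℂ A_r, μ.re < 0)
    (V_t : Matrix (Fin n) (Fin r) ℂ)
    (hVt : A * V_t = V_t * S_r + B * L_r - NormedSpace.exp (t • A) * B * L_r * NormedSpace.exp (-(t • S_r)))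
    (Ptilde : Matrix (Fin n) (Fin r) ℂ)
    (hPtilde : Ptilde = Matrix.of fun i j =>
      ∫ τ in (0:ℝ)..t, (NormedSpace.exp (τ • A) * B * B_rᴴ * NormedSpace.exp (τ • A_rᴴ)) i j) :
    (A * (V_t * Q_S⁻¹) + (V_t * Q_S⁻¹) * A_rᴴ + B * B_rᴴ
        - NormedSpace.exp (t • A) * B * B_rᴴ * NormedSpace.exp (t • A_rᴴ) = 0) ∧
      Ptilde = V_t * Q_S⁻¹ := by
  have hdet : IsUnit Q_S.det := (isUnit_iff_isUnit_det _).1 hQinv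
  have hQ : Q_S.IsHermitian := by
    refine isHermitian_of_lyapunov_eq_zero (L := L_r) (F := exp (-(t • S_r))) hS ?_
    rwa [← exp_conjTranspose, conjTranspose_neg, conjTranspose_smul, star_trivial]
  have hArH : A_rᴴ = -(Q_S * S_r * Q_S⁻¹) := by
    simp only [hA_r, conjTranspose_neg, conjTranspose_mul, conjTranspose_nonsing_inv,
      conjTranspose_conjTranspose, hQ.eq, Matrix.mul_assoc]
  have hBrH : B_rᴴ = -(L_r * Q_S⁻¹) := by
    simp only [hB_r, conjTranspose_neg, conjTranspose_mul, conjTranspose_nonsing_inv,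
      conjTranspose_conjTranspose, hQ.eq]
  have hexp : exp (t • A_rᴴ) = Q_S * exp (-(t • S_r)) * Q_S⁻¹ := by
    rw [← exp_conj _ _ hQinv, hArH]
    simp only [smul_neg, Matrix.mul_neg, Matrix.neg_mul, Matrix.mul_smul, Matrix.smul_mul,
      Matrix.mul_assoc]
  have hX : A * (V_t * Q_S⁻¹) + V_t * Q_S⁻¹ * A_rᴴ
      = exp (t • A) * (B * B_rᴴ) * exp (t • A_rᴴ) - B * B_rᴴ := by
    rw [hexp, hArH, hBrH, ← Matrix.mul_assoc A, hVt]
    simp only [Matrix.sub_mul, Matrix.add_mul, Matrix.mul_neg, Matrix.neg_mul, Matrix.mul_assoc,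
      nonsing_inv_mul_cancel_left _ _ hdet]
    abel
  have hP : A * Ptilde + Ptilde * A_rᴴ = exp (t • A) * (B * B_rᴴ) * exp (t • A_rᴴ) - B * B_rᴴ := by
    rw [mul_add_mul_eq_of_eq_intervalIntegral_exp_smul (C := B * B_rᴴ) (a := 0) (b := t)
      (by simp only [hPtilde, Matrix.mul_assoc])]
    simp only [zero_smul, exp_zero, Matrix.one_mul, Matrix.mul_one]
  refine ⟨by rw [hX, Matrix.mul_assoc _ B]; abel, ?_⟩
  refine sub_eq_zero.1 (eq_zero_of_mul_add_mul_conjTranspose_eq_zero hA hA_rHur ?_)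
  rw [Matrix.mul_sub, Matrix.sub_mul, sub_add_sub_comm, hP, hX, sub_self]

/-- Theorem 1(v) core computation: `X = V_t Q_S⁻¹` satisfies the
time-limited cross-Gramian Sylvester equation, and hence by uniqueness the cross
Gramian `P̃_T` equals `V_t Q_S⁻¹`. -/
theorem theorem1_v_cross_gramian
    (n r m : ℕ) (A : Matrix (Fin n) (Fin n) ℂ) (B : Matrix (Fin n) (Fin m) ℂ)
    (hA : ∀ μ ∈ spectrum ℂ A, μ.re < 0)
    (t : ℝ) (ht : 0 < t)
    (S_r : Matrix (Fin r) (Fin r) ℂ) (L_r : Matrix (Fin m) (Fin r) ℂ)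
    (hS : ∀ μ ∈ spectrum ℂ S_r, 0 < μ.re)
    (Q_S : Matrix (Fin r) (Fin r) ℂ) (hQinv : IsUnit Q_S)
    (hLyap : -(S_rᴴ * Q_S) - Q_S * S_r + L_rᴴ * L_r
        - NormedSpace.exp (-(t • S_rᴴ)) * L_rᴴ * L_r * NormedSpace.exp (-(t • S_r)) = 0)
    (A_r : Matrix (Fin r) (Fin r) ℂ) (B_r : Matrix (Fin r) (Fin m) ℂ)
    (hA_r : A_r = -(Q_S⁻¹ * S_rᴴ * Q_S)) (hB_r : B_r = -(Q_S⁻¹ * L_rᴴ))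
    (hA_rHur : ∀ μ ∈ spectrum ℂ A_r, μ.re < 0)
    (V_t : Matrix (Fin n) (Fin r) ℂ)
    (hVt : A * V_t = V_t * S_r + B * L_r - NormedSpace.exp (t • A) * B * L_r * NormedSpace.exp (-(t • S_r)))
    (Ptilde : Matrix (Fin n) (Fin r) ℂ)
    (hPtilde : Ptilde = Matrix.of fun i j =>
      ∫ τ in (0:ℝ)..t, (NormedSpace.exp (τ • A) * B * B_rᴴ * NormedSpace.exp (τ • A_rᴴ)) i j) :
    (A * (V_t * Q_S⁻¹) + (V_t * Q_S⁻¹) * A_rᴴ + B * B_rᴴ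
        - NormedSpace.exp (t • A) * B * B_rᴴ * NormedSpace.exp (t • A_rᴴ) = 0) ∧
      Ptilde = V_t * Q_S⁻¹ :=
  theorem1_v_cross_gramian_general n r m A B hA t S_r L_r hS Q_S hQinv hLyap A_r B_r hA_r hB_r
    hA_rHur V_t hVt Ptilde hPtilde
end

section
/- Time-limited H₂ error as Gramian deficit: under the time-limited pseudo-optimality hypothesis C_r P̂_T = C P̃_T with P̃_T = V_t P̂_T and C_r = C V_t, the squared error satisfies ‖H − Ĥ_r‖²_{H₂,t} = tr( C (P_T − V_t P̂_T V_t*) C* ); in particular, since the left side is nonnegative, tr(C V_t P̂_T V_t* C*) ≤ tr(C P_T C*). -/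
open Matrix MeasureTheory NormedSpace

/-!
The impulse response of the error system is `F τ = C exp(τA) B - C_r exp(τA_r) B_r`, and
`∫₀ᵗ tr (F Fᴴ)` expands into the three Gramian traces of the error formula, which is therefore
nonnegative. With `C_r = C V_t` and `P̃_T = V_t P̂_T`, the cross term and the reduced term both
equal `tr (C V_t P̂_T V_tᴴ Cᴴ)`, which leaves `tr (C (P_T - V_t P̂_T V_tᴴ) Cᴴ)`.
-/

section CrossGramian

variable {ι ι' κ ν : Type*} [Fintype ι] [Fintype ι'] [Fintype κ] [Fintype ν]

noncomputable def crossGramian (t : ℝ) (x : ℝ → Matrix ι κ ℂ) (y : ℝ → Matrix ι' κ ℂ) :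
    Matrix ι ι' ℂ :=
  of fun i j => ∫ τ in (0:ℝ)..t, (x τ * (y τ)ᴴ) i j

theorem trace_entrywiseIntegral_mul {t : ℝ} {f : ℝ → Matrix ι ι' ℂ} (hf : Continuous f)
    (K : Matrix ι' ι ℂ) :
    trace ((of fun i j => ∫ τ in (0:ℝ)..t, f τ i j) * K) = ∫ τ in (0:ℝ)..t, trace (f τ * K) := by
  have hcont : ∀ i j, Continuous fun τ => f τ i j * K j i := fun i j =>
    (hf.matrix_elem i j).mul continuous_const
  simp only [trace, diag, mul_apply, of_apply, ← intervalIntegral.integral_mul_const]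
  rw [intervalIntegral.integral_finsetSum]
  · refine Finset.sum_congr rfl fun i _ => ?_
    rw [intervalIntegral.integral_finsetSum fun j _ => (hcont i j).intervalIntegrable _ _]
  · exact fun i _ => (continuous_finsetSum _ fun j _ => hcont i j).intervalIntegrable _ _

theorem trace_mul_crossGramian_mul_conjTranspose {t : ℝ} {x : ℝ → Matrix ι κ ℂ}
    {y : ℝ → Matrix ι' κ ℂ} (hx : Continuous x) (hy : Continuous y)
    (L : Matrix ν ι ℂ) (R : Matrix ν ι' ℂ) :
    trace (L * crossGramian t x y * Rᴴ) = ∫ τ in (0:ℝ)..t, trace (L * x τ * (R * y τ)ᴴ) := by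
  rw [Matrix.mul_assoc, trace_mul_comm, Matrix.mul_assoc, crossGramian,
    trace_entrywiseIntegral_mul (hx.matrix_mul hy.matrix_conjTranspose)]
  refine intervalIntegral.integral_congr fun τ _ => ?_
  rw [trace_mul_comm, ← trace_mul_cycle]
  simp only [conjTranspose_mul, Matrix.mul_assoc]

theorem re_trace_sub_mul_conjTranspose_sub (a b : Matrix ν κ ℂ) :
    (trace ((a - b) * (a - b)ᴴ)).re
      = (trace (a * aᴴ)).re - 2 * (trace (a * bᴴ)).re + (trace (b * bᴴ)).re := by
  have hba : trace (b * aᴴ) = star (trace (a * bᴴ)) := by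
    rw [← trace_conjTranspose, conjTranspose_mul, conjTranspose_conjTranspose]
  simp only [conjTranspose_sub, Matrix.sub_mul, Matrix.mul_sub, trace_sub, Complex.sub_re, hba,
    Complex.star_def, Complex.conj_re]
  ring

theorem re_trace_mul_crossGramian_mul_conjTranspose {t : ℝ} {x : ℝ → Matrix ι κ ℂ}
    {y : ℝ → Matrix ι' κ ℂ} (hx : Continuous x) (hy : Continuous y)
    (L : Matrix ν ι ℂ) (R : Matrix ν ι' ℂ) :
    (trace (L * crossGramian t x y * Rᴴ)).re
      = ∫ τ in (0:ℝ)..t, (trace (L * x τ * (R * y τ)ᴴ)).re := by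
  have hcont : Continuous fun τ => trace (L * x τ * (R * y τ)ᴴ) :=
    ((continuous_const.matrix_mul hx).matrix_mul
      (continuous_const.matrix_mul hy).matrix_conjTranspose).matrix_trace
  rw [trace_mul_crossGramian_mul_conjTranspose hx hy]
  exact (ContinuousLinearMap.intervalIntegral_comp_comm Complex.reCLM
    (hcont.intervalIntegrable _ _)).symm

open scoped ComplexOrder in
theorem re_trace_mul_conjTranspose_self_nonneg (a : Matrix ν κ ℂ) : 0 ≤ (trace (a * aᴴ)).re :=
  (Complex.nonneg_iff.mp (posSemidef_self_mul_conjTranspose a).trace_nonneg).1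

theorem re_trace_crossGramian_error_nonneg {t : ℝ} (ht : 0 ≤ t) {x : ℝ → Matrix ι κ ℂ}
    {y : ℝ → Matrix ι' κ ℂ} (hx : Continuous x) (hy : Continuous y)
    (C : Matrix ν ι ℂ) (C_r : Matrix ν ι' ℂ) :
    0 ≤ (trace (C * crossGramian t x x * Cᴴ)).re - 2 * (trace (C * crossGramian t x y * C_rᴴ)).re
      + (trace (C_r * crossGramian t y y * C_rᴴ)).re := by
  have hint : ∀ {u v : ℝ → Matrix ν κ ℂ}, Continuous u → Continuous v →
      IntervalIntegrable (fun τ => (trace (u τ * (v τ)ᴴ)).re) volume 0 t := fun hu hv =>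
    (Complex.continuous_re.comp
      (hu.matrix_mul hv.matrix_conjTranspose).matrix_trace).intervalIntegrable _ _
  have hCx : Continuous fun τ => C * x τ := continuous_const.matrix_mul hx
  have hCy : Continuous fun τ => C_r * y τ := continuous_const.matrix_mul hy
  rw [re_trace_mul_crossGramian_mul_conjTranspose hx hx,
    re_trace_mul_crossGramian_mul_conjTranspose hx hy,
    re_trace_mul_crossGramian_mul_conjTranspose hy hy, ← intervalIntegral.integral_const_mul,
    ← intervalIntegral.integral_sub (hint hCx hCx) ((hint hCx hCy).const_mul 2),
    ← intervalIntegral.integral_add ((hint hCx hCx).sub ((hint hCx hCy).const_mul 2))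
      (hint hCy hCy)]
  simp only [← re_trace_sub_mul_conjTranspose_sub]
  exact intervalIntegral.integral_nonneg ht fun τ _ => re_trace_mul_conjTranspose_self_nonneg _

end CrossGramian

section MatrixExponential

attribute [local instance] Matrix.linftyOpNormedRing Matrix.linftyOpNormedAlgebra

variable {ι κ : Type*} [Fintype ι] [DecidableEq ι]

theorem continuous_exp_smul_mul (A : Matrix ι ι ℂ) (B : Matrix ι κ ℂ) :
    Continuous fun τ : ℝ => exp (τ • A) * B :=
  (exp_continuous.comp (continuous_id.smul continuous_const)).matrix_mul continuous_const

theorem conjTranspose_exp_smul (τ : ℝ) (A : Matrix ι ι ℂ) : (exp (τ • A))ᴴ = exp (τ • Aᴴ) := by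
  rw [← exp_conjTranspose, conjTranspose_smul, star_trivial]

end MatrixExponential

theorem of_integral_exp_mul_mul_exp_eq_crossGramian {ι ι' κ : Type*} [Fintype ι] [DecidableEq ι]
    [Fintype ι'] [DecidableEq ι'] [Fintype κ] (t : ℝ) (A : Matrix ι ι ℂ) (B : Matrix ι κ ℂ)
    (A_r : Matrix ι' ι' ℂ) (B_r : Matrix ι' κ ℂ) :
    (of fun i j => ∫ τ in (0:ℝ)..t, (exp (τ • A) * B * B_rᴴ * exp (τ • A_rᴴ)) i j)
      = crossGramian t (fun τ => exp (τ • A) * B) (fun τ => exp (τ • A_r) * B_r) := by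
  simp only [crossGramian, conjTranspose_mul, conjTranspose_exp_smul, Matrix.mul_assoc]

theorem timeLimited_error_as_gramian_deficit_general
    (n r m p : ℕ) (A : Matrix (Fin n) (Fin n) ℂ) (A_r : Matrix (Fin r) (Fin r) ℂ)
    (B : Matrix (Fin n) (Fin m) ℂ) (B_r : Matrix (Fin r) (Fin m) ℂ)
    (C : Matrix (Fin p) (Fin n) ℂ) (C_r : Matrix (Fin p) (Fin r) ℂ)
    (t : ℝ) (ht : 0 < t)
    (P_T : Matrix (Fin n) (Fin n) ℂ) (Phat : Matrix (Fin r) (Fin r) ℂ)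
    (Ptilde : Matrix (Fin n) (Fin r) ℂ)
    (hP : P_T = Matrix.of fun i j =>
      ∫ τ in (0:ℝ)..t, (NormedSpace.exp (τ • A) * B * Bᴴ * NormedSpace.exp (τ • Aᴴ)) i j)
    (hPhat : Phat = Matrix.of fun i j =>
      ∫ τ in (0:ℝ)..t, (NormedSpace.exp (τ • A_r) * B_r * B_rᴴ * NormedSpace.exp (τ • A_rᴴ)) i j)
    (hPtilde : Ptilde = Matrix.of fun i j =>
      ∫ τ in (0:ℝ)..t, (NormedSpace.exp (τ • A) * B * B_rᴴ * NormedSpace.exp (τ • A_rᴴ)) i j)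
    (V_t : Matrix (Fin n) (Fin r) ℂ)
    (hPtildeVt : Ptilde = V_t * Phat)
    (hC_r : C_r = C * V_t) :
    ((Matrix.trace (C * P_T * Cᴴ)).re - 2 * (Matrix.trace (C * Ptilde * C_rᴴ)).re
        + (Matrix.trace (C_r * Phat * C_rᴴ)).re
      = (Matrix.trace (C * (P_T - V_t * Phat * V_tᴴ) * Cᴴ)).re) ∧
      (Matrix.trace (C * V_t * Phat * V_tᴴ * Cᴴ)).re ≤ (Matrix.trace (C * P_T * Cᴴ)).re := by
  have hcross : C * Ptilde * C_rᴴ = C * (V_t * Phat * V_tᴴ) * Cᴴ := by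
    simp only [hPtildeVt, hC_r, conjTranspose_mul, Matrix.mul_assoc]
  have hreduced : C_r * Phat * C_rᴴ = C * (V_t * Phat * V_tᴴ) * Cᴴ := by
    simp only [hC_r, conjTranspose_mul, Matrix.mul_assoc]
  have hdeficit : (trace (C * (P_T - V_t * Phat * V_tᴴ) * Cᴴ)).re
      = (trace (C * P_T * Cᴴ)).re - (trace (C * (V_t * Phat * V_tᴴ) * Cᴴ)).re := by
    rw [Matrix.mul_sub, Matrix.sub_mul, trace_sub, Complex.sub_re]
  have herror : (trace (C * P_T * Cᴴ)).re - 2 * (trace (C * Ptilde * C_rᴴ)).re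
      + (trace (C_r * Phat * C_rᴴ)).re = (trace (C * (P_T - V_t * Phat * V_tᴴ) * Cᴴ)).re := by
    rw [hcross, hreduced, hdeficit]
    ring
  refine ⟨herror, ?_⟩
  have hnonneg := re_trace_crossGramian_error_nonneg ht.le (continuous_exp_smul_mul A B)
    (continuous_exp_smul_mul A_r B_r) C C_r
  rw [← of_integral_exp_mul_mul_exp_eq_crossGramian,
    ← of_integral_exp_mul_mul_exp_eq_crossGramian, ← of_integral_exp_mul_mul_exp_eq_crossGramian,
    ← hP, ← hPhat, ← hPtilde, herror, hdeficit] at hnonneg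
  simpa only [Matrix.mul_assoc, sub_nonneg] using hnonneg

/-- Under time-limited pseudo-optimality `C_r P̂_T = C P̃_T` with
`P̃_T = V_t P̂_T` and `C_r = C V_t`, the squared error equals
`tr(C (P_T − V_t P̂_T V_tᴴ) Cᴴ)`, and `tr(C V_t P̂_T V_tᴴ Cᴴ) ≤ tr(C P_T Cᴴ)`. -/
theorem timeLimited_error_as_gramian_deficit
    (n r m p : ℕ) (A : Matrix (Fin n) (Fin n) ℂ) (A_r : Matrix (Fin r) (Fin r) ℂ)
    (B : Matrix (Fin n) (Fin m) ℂ) (B_r : Matrix (Fin r) (Fin m) ℂ)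
    (C : Matrix (Fin p) (Fin n) ℂ) (C_r : Matrix (Fin p) (Fin r) ℂ)
    (hA : ∀ μ ∈ spectrum ℂ A, μ.re < 0)
    (hA_r : ∀ μ ∈ spectrum ℂ A_r, μ.re < 0)
    (t : ℝ) (ht : 0 < t)
    (P_T : Matrix (Fin n) (Fin n) ℂ) (Phat : Matrix (Fin r) (Fin r) ℂ)
    (Ptilde : Matrix (Fin n) (Fin r) ℂ)
    (hP : P_T = Matrix.of fun i j =>
      ∫ τ in (0:ℝ)..t, (NormedSpace.exp (τ • A) * B * Bᴴ * NormedSpace.exp (τ • Aᴴ)) i j)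
    (hPhat : Phat = Matrix.of fun i j =>
      ∫ τ in (0:ℝ)..t, (NormedSpace.exp (τ • A_r) * B_r * B_rᴴ * NormedSpace.exp (τ • A_rᴴ)) i j)
    (hPtilde : Ptilde = Matrix.of fun i j =>
      ∫ τ in (0:ℝ)..t, (NormedSpace.exp (τ • A) * B * B_rᴴ * NormedSpace.exp (τ • A_rᴴ)) i j)
    (V_t : Matrix (Fin n) (Fin r) ℂ)
    (hPtildeVt : Ptilde = V_t * Phat)
    (hC_r : C_r = C * V_t)
    (hOpt : C_r * Phat = C * Ptilde) :
    ((Matrix.trace (C * P_T * Cᴴ)).re - 2 * (Matrix.trace (C * Ptilde * C_rᴴ)).re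
        + (Matrix.trace (C_r * Phat * C_rᴴ)).re
      = (Matrix.trace (C * (P_T - V_t * Phat * V_tᴴ) * Cᴴ)).re) ∧
      (Matrix.trace (C * V_t * Phat * V_tᴴ * Cᴴ)).re ≤ (Matrix.trace (C * P_T * Cᴴ)).re :=
  timeLimited_error_as_gramian_deficit_general n r m p A A_r B B_r C C_r t ht P_T Phat Ptilde hP
    hPhat hPtilde V_t hPtildeVt hC_r
end
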